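/- arXiv:1902.10041 — 2 statements merged into one kernel-verified Lean document; each statement's English description precedes it below -/
import Mathlib

section
/- For any protocol, define the summary of a configuration C to be the element of ℕ^Q × ℕ^M recording, for each state, the number of agents of C in that state and, for each message, the number of packets of C carrying it. Then: (i) if two configurations have equal summaries, then one is a stable consensus if and only if the other is; and (ii) if configurations C and D satisfy summary(C) ≤ summary(D) componentwise and C is not a stable consensus, then D is not a stable consensus (the set of summaries of non-stable-consensus configurations is upward closed). -/
open scoped Classical

/-- A configuration: finitely many agents (identified by natural numbers) with states in `Q`,
and finitely many packets (identified by natural numbers) carrying messages in `M`.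
`agentState a = none` means `a` is not an agent of the configuration, and similarly
`packetMsg p = none` means `p` is not a packet of the configuration. -/
structure Config (Q : Type) (M : Type) where
  agentState : ℕ → Option Q
  packetMsg : ℕ → Option M
  finAgents : {a : ℕ | agentState a ≠ none}.Finite
  finPackets : {p : ℕ | packetMsg p ≠ none}.Finite

namespace Config

variable {Q M : Type}

/-- The set `Dom(C_A)` of agents of a configuration. -/
def agentsDom (C : Config Q M) : Set ℕ := {a | C.agentState a ≠ none}

/-- The set `Dom(C_P)` of packets of a configuration. -/
def packetsDom (C : Config Q M) : Set ℕ := {p | C.packetMsg p ≠ none}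

/-- Update (add, change or remove) the state of agent `a`. -/
def setAgent (C : Config Q M) (a : ℕ) (s : Option Q) : Config Q M where
  agentState := Function.update C.agentState a s
  packetMsg := C.packetMsg
  finAgents := by
    apply Set.Finite.subset (C.finAgents.union (Set.finite_singleton a))
    intro x hx
    rcases eq_or_ne x a with h | h
    · exact Or.inr h
    · exact Or.inl (by simpa [Function.update, h] using hx)
  finPackets := C.finPackets

/-- Update (add, change or remove) the content of packet `p`. -/
def setPacket (C : Config Q M) (p : ℕ) (m : Option M) : Config Q M where
  agentState := C.agentState
  packetMsg := Function.update C.packetMsg p m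
  finAgents := C.finAgents
  finPackets := by
    apply Set.Finite.subset (C.finPackets.union (Set.finite_singleton p))
    intro x hx
    rcases eq_or_ne x p with h | h
    · exact Or.inr h
    · exact Or.inl (by simpa [Function.update, h] using hx)

/-- Rename agents and packets by permutations of `ℕ`:
the agent `a` of the result is in the state of agent `πA a` of `C`. -/
def rename (C : Config Q M) (πA πP : Equiv.Perm ℕ) : Config Q M where
  agentState := fun a => C.agentState (πA a)
  packetMsg := fun p => C.packetMsg (πP p)
  finAgents := by
    have h : {a : ℕ | C.agentState (πA a) ≠ none} = πA ⁻¹' C.agentsDom := rfl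
    rw [h]
    exact C.finAgents.preimage πA.injective.injOn
  finPackets := by
    have h : {p : ℕ | C.packetMsg (πP p) ≠ none} = πP ⁻¹' C.packetsDom := rfl
    rw [h]
    exact C.finPackets.preimage πP.injective.injOn

/-- The number of agents of `C` in state `q`. -/
noncomputable def numInState (C : Config Q M) (q : Q) : ℕ :=
  {a | C.agentState a = some q}.ncard

/-- The number of packets of `C` carrying message `m` (the supply of `m` in `C`). -/
noncomputable def supply (C : Config Q M) (m : M) : ℕ :=
  {p | C.packetMsg p = some m}.ncard

end Config

/-- The type of step relations: `Step C A C'` states that there is a step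
from `C` to `C'` whose set of active agents is `A`. -/
abbrev StepRel (Q M : Type) := Config Q M → Set ℕ → Config Q M → Prop

/-- The conditions that the step relation of a protocol must satisfy:
agent conservation, agent and packet anonymity, possibility to ignore extra packets,
and possibility to add passive agents. -/
structure IsProtocolStep {Q M : Type} (Step : StepRel Q M) : Prop where
  active_subset : ∀ {C A C'}, Step C A C' → A ⊆ C.agentsDom
  agent_conservation : ∀ {C A C'}, Step C A C' → C.agentsDom = C'.agentsDom
  anonymity : ∀ (πA πP : Equiv.Perm ℕ) {C A C'}, Step C A C' →
    Step (C.rename πA πP) (πA ⁻¹' A) (C'.rename πA πP)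
  ignore_packets : ∀ {C A C'} (p : ℕ) (m : M), Step C A C' →
    C.packetMsg p = none → C'.packetMsg p = none →
    Step (C.setPacket p (some m)) A (C'.setPacket p (some m))
  add_passive : ∀ {C A C'} (a : ℕ) (q : Q), Step C A C' →
    C.agentState a = none → C'.agentState a = none →
    ∃ q' : Q, Step (C.setAgent a (some q)) A (C'.setAgent a (some q'))

/-- `C → C'` : a step from `C` to `C'` with some set of active agents. -/
def stepTo {Q M : Type} (Step : StepRel Q M) (C C' : Config Q M) : Prop := ∃ A, Step C A C'

/-- Reachability via finitely many steps. -/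
def Reaches {Q M : Type} (Step : StepRel Q M) : Config Q M → Config Q M → Prop :=
  Relation.ReflTransGen (stepTo Step)

/-- An infinite execution: at each moment either nothing changes or a single step occurs. -/
def IsExecution {Q M : Type} (Step : StepRel Q M) (E : ℕ → Config Q M) : Prop :=
  ∀ i, E (i + 1) = E i ∨ stepTo Step (E i) (E (i + 1))

/-- A finite execution of length `n`, given by the first `n + 1` values of `E`. -/
def IsFinExecution {Q M : Type} (Step : StepRel Q M) (n : ℕ) (E : ℕ → Config Q M) : Prop :=
  ∀ i < n, E (i + 1) = E i ∨ stepTo Step (E i) (E (i + 1))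

/-- The default fairness condition: every configuration either becomes unreachable from
some moment on, or occurs infinitely many times in the execution. -/
def DefaultFair {Q M : Type} (Step : StepRel Q M) (E : ℕ → Config Q M) : Prop :=
  ∀ C : Config Q M,
    (∃ n, ∀ m, n ≤ m → ¬ Reaches Step (E m) C) ∨ (∀ n, ∃ m, n ≤ m ∧ E m = C)

/-- A fairness condition is eventual if every finite execution can be continued
to an infinite execution satisfying it. -/
def Eventual {Q M : Type} (Step : StepRel Q M) (Φ : (ℕ → Config Q M) → Prop) : Prop :=
  ∀ (n : ℕ) (E : ℕ → Config Q M), IsFinExecution Step n E →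
    ∃ E' : ℕ → Config Q M, (∀ i ≤ n, E' i = E i) ∧ IsExecution Step E' ∧ Φ E'

/-- A fairness condition ensures activity if whenever an execution satisfying it is
constant from some moment on, no step leads from the final configuration to a
different configuration. -/
def EnsuresActivity {Q M : Type} (Step : StepRel Q M) (Φ : (ℕ → Config Q M) → Prop) : Prop :=
  ∀ E, IsExecution Step E → Φ E → ∀ n, (∀ m, n ≤ m → E m = E n) →
    ∀ C', stepTo Step (E n) C' → C' = E n

/-- A protocol: input mapping, individual output function, step relation
and fairness condition (the finite sets of states `Q`, messages `M` and input
letters `Sg` are type parameters). -/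
structure Protocol (Q M Sg : Type) where
  Iin : Sg → Q
  out : Q → Bool
  Step : StepRel Q M
  fair : (ℕ → Config Q M) → Prop

/-- `C` is a consensus with output value `b`. -/
def IsConsensus {Q M : Type} (out : Q → Bool) (C : Config Q M) (b : Bool) : Prop :=
  ∀ a q, C.agentState a = some q → out q = b

/-- `C` is a stable consensus with output value `b`. -/
def IsStableConsensus {Q M : Type} (Step : StepRel Q M) (out : Q → Bool)
    (C : Config Q M) (b : Bool) : Prop :=
  ∀ D, Reaches Step C D → IsConsensus out D b

/-- `C` is an input configuration for the input `x` : no packets, and for every state `q`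
exactly as many agents in `q` as prescribed by `x` and the input mapping. -/
def IsInputConfig {Q M Sg : Type} [Fintype Sg] (Iin : Sg → Q) (x : Sg → ℕ)
    (C : Config Q M) : Prop :=
  (∀ p, C.packetMsg p = none) ∧
  ∀ q : Q, C.numInState q = ∑ σ : Sg, if Iin σ = q then x σ else 0

/-- The protocol `P` implements the predicate `φ` : every fair execution from an input
configuration for `x` reaches a stable consensus with output value `φ x`. -/
def Implements {Q M Sg : Type} [Fintype Sg] (P : Protocol Q M Sg)
    (φ : (Sg → ℕ) → Bool) : Prop :=
  ∀ (x : Sg → ℕ) (C0 : Config Q M), IsInputConfig P.Iin x C0 →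
    ∀ E : ℕ → Config Q M, IsExecution P.Step E → P.fair E → E 0 = C0 →
      ∃ n, IsStableConsensus P.Step P.out (E n) (φ x)

/-- The unreliable version of a step relation: every step `C --A--> C'` additionally
allows all degraded steps `C --A--> C''` satisfying population preservation,
state preservation, message preservation, and reliance on active agents. -/
def UnrelStep {Q M : Type} (Step : StepRel Q M) : StepRel Q M := fun C A C'' =>
  Step C A C'' ∨ ∃ C', Step C A C' ∧
    C''.agentsDom = C'.agentsDom ∧
    C''.packetMsg = C'.packetMsg ∧
    (∀ a, C''.agentState a = C.agentState a ∨ C''.agentState a = C'.agentState a) ∧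
    ((∀ a ∉ A, C''.agentState a = C.agentState a) ∨
      (∀ a ∈ A, C''.agentState a = C'.agentState a))

/-- The unreliable protocol corresponding to `P`. -/
def Unreliable {Q M Sg : Type} (P : Protocol Q M Sg) : Protocol Q M Sg :=
  { P with Step := UnrelStep P.Step }

/-- A shadow extension of the execution `E` around the agent `a`, using the fresh
agent `a'` : a set of executions starting from `E 0` with the extra agent `a'` added in
the state of `a`, such that removing `a'` from any of them yields `E`, and at every
moment some execution of the set has `a` and `a'` in the same state. -/
def IsShadowExtension {Q M : Type} (Step : StepRel Q M) (E : ℕ → Config Q M)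
    (a a' : ℕ) (Ext : Set (ℕ → Config Q M)) : Prop :=
  a ∈ (E 0).agentsDom ∧ a' ∉ (E 0).agentsDom ∧
  (∀ E' ∈ Ext, IsExecution Step E' ∧ (E' 0).agentState a' = (E 0).agentState a ∧
    ∀ k, (E' k).setAgent a' none = E k) ∧
  ∀ k, ∃ E' ∈ Ext, (E' k).agentState a' = (E' k).agentState a

/-- A protocol is shadow-permitting if from every configuration there is a fair
execution having a shadow extension around every agent. -/
def ShadowPermitting {Q M Sg : Type} (P : Protocol Q M Sg) : Prop :=
  ∀ C : Config Q M, ∃ E, IsExecution P.Step E ∧ E 0 = C ∧ P.fair E ∧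
    ∀ a ∈ C.agentsDom, ∃ a' ∉ C.agentsDom,
      ∃ Ext, IsShadowExtension P.Step E a a' Ext

/-- Truncatability with constant `K` : adding a fresh agent in a state already
represented by at least `K` agents of a stable consensus yields a stable consensus. -/
def TruncatableWith {Q M : Type} (Step : StepRel Q M) (out : Q → Bool) (K : ℕ) : Prop :=
  ∀ (C : Config Q M) (b : Bool) (q : Q), IsStableConsensus Step out C b →
    K ≤ C.numInState q → ∀ a', C.agentState a' = none →
      IsStableConsensus Step out (C.setAgent a' (some q)) b

/-- The cube with lower bounds `l` and (possibly infinite) upper bounds `u`. -/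
def cube {Sg : Type} (l : Sg → ℕ) (u : Sg → ℕ∞) : Set (Sg → ℕ) :=
  {x | ∀ σ, l σ ≤ x σ ∧ (x σ : ℕ∞) ≤ u σ}

/-- A counting set is a finite union of cubes. -/
def IsCountingSet {Sg : Type} (S : Set (Sg → ℕ)) : Prop :=
  ∃ (n : ℕ) (l : Fin n → Sg → ℕ) (u : Fin n → Sg → ℕ∞), S = ⋃ j, cube (l j) (u j)

/-- A counting predicate is the membership predicate of a counting set. -/
def IsCountingPred {Sg : Type} (φ : (Sg → ℕ) → Bool) : Prop :=
  IsCountingSet {x | φ x = true}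

/-- The summary of a configuration: for each state the number of agents in it,
and for each message the number of packets carrying it. -/
noncomputable def summary {Q M : Type} (C : Config Q M) : (Q → ℕ) × (M → ℕ) :=
  (fun q => C.numInState q, fun m => C.supply m)

section Aux

open Config

variable {Q M : Type}

lemma Config.ext' {C D : Config Q M} (h1 : C.agentState = D.agentState)
    (h2 : C.packetMsg = D.packetMsg) : C = D := by
  cases C; cases D; cases h1; cases h2; rfl

lemma fiberA_finite (C : Config Q M) (q : Q) : {a | C.agentState a = some q}.Finite :=
  C.finAgents.subset (fun a ha => by simp only [Set.mem_setOf_eq] at *; simp [ha])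

lemma fiberP_finite (C : Config Q M) (m : M) : {p | C.packetMsg p = some m}.Finite :=
  C.finPackets.subset (fun p hp => by simp only [Set.mem_setOf_eq] at *; simp [hp])

lemma numInState_rename (C : Config Q M) (πA πP : Equiv.Perm ℕ) (q : Q) :
    (C.rename πA πP).numInState q = C.numInState q := by
  have h : {a | (C.rename πA πP).agentState a = some q}
      = πA.symm '' {a | C.agentState a = some q} := by
    ext a
    simp only [Set.mem_setOf_eq, Set.mem_image, Config.rename]
    constructor
    · intro h; exact ⟨πA a, h, by simp⟩
    · rintro ⟨x, hx, rfl⟩; simpa using hx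
  rw [Config.numInState, h, Set.ncard_image_of_injective _ πA.symm.injective]
  rfl

lemma supply_rename (C : Config Q M) (πA πP : Equiv.Perm ℕ) (m : M) :
    (C.rename πA πP).supply m = C.supply m := by
  have h : {p | (C.rename πA πP).packetMsg p = some m}
      = πP.symm '' {p | C.packetMsg p = some m} := by
    ext p
    simp only [Set.mem_setOf_eq, Set.mem_image, Config.rename]
    constructor
    · intro h; exact ⟨πP p, h, by simp⟩
    · rintro ⟨x, hx, rfl⟩; simpa using hx
  rw [Config.supply, h, Set.ncard_image_of_injective _ πP.symm.injective]
  rfl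

lemma numInState_setAgent (C : Config Q M) {a : ℕ} (h : C.agentState a = none)
    (q q' : Q) :
    (C.setAgent a (some q)).numInState q' = C.numInState q' + if q' = q then 1 else 0 := by
  by_cases hq : q' = q
  · subst hq
    have hset : {x | (C.setAgent a (some q')).agentState x = some q'}
        = insert a {x | C.agentState x = some q'} := by
      ext x
      rcases eq_or_ne x a with rfl | hx
      · simp [Config.setAgent, Function.update]
      · simp [Config.setAgent, Function.update, hx]
    have hna : a ∉ {x | C.agentState x = some q'} := by simp [h]
    rw [Config.numInState, hset, Set.ncard_insert_of_notMem hna (fiberA_finite C q')]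
    simp [Config.numInState]
  · have hset : {x | (C.setAgent a (some q)).agentState x = some q'}
        = {x | C.agentState x = some q'} := by
      ext x
      rcases eq_or_ne x a with rfl | hx
      · simp [Config.setAgent, Function.update, h, Ne.symm hq]
      · simp [Config.setAgent, Function.update, hx]
    simp [Config.numInState, hset, hq]

lemma supply_setAgent (C : Config Q M) (a : ℕ) (s : Option Q) (m : M) :
    (C.setAgent a s).supply m = C.supply m := rfl

lemma numInState_setPacket (C : Config Q M) (p : ℕ) (s : Option M) (q : Q) :
    (C.setPacket p s).numInState q = C.numInState q := rfl

lemma supply_setPacket (C : Config Q M) {p : ℕ} (h : C.packetMsg p = none)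
    (m m' : M) :
    (C.setPacket p (some m)).supply m' = C.supply m' + if m' = m then 1 else 0 := by
  by_cases hm : m' = m
  · subst hm
    have hset : {x | (C.setPacket p (some m')).packetMsg x = some m'}
        = insert p {x | C.packetMsg x = some m'} := by
      ext x
      rcases eq_or_ne x p with rfl | hx
      · simp [Config.setPacket, Function.update]
      · simp [Config.setPacket, Function.update, hx]
    have hnp : p ∉ {x | C.packetMsg x = some m'} := by simp [h]
    rw [Config.supply, hset, Set.ncard_insert_of_notMem hnp (fiberP_finite C m')]
    simp [Config.supply]
  · have hset : {x | (C.setPacket p (some m)).packetMsg x = some m'}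
        = {x | C.packetMsg x = some m'} := by
      ext x
      rcases eq_or_ne x p with rfl | hx
      · simp [Config.setPacket, Function.update, h, Ne.symm hm]
      · simp [Config.setPacket, Function.update, hx]
    simp [Config.supply, hset, hm]

/-- From equal fiber counts, a permutation matching two functions. -/
lemma exists_perm_comp {β : Type} (f g : ℕ → Option β)
    (hf : {a | f a ≠ none}.Finite) (hg : {a | g a ≠ none}.Finite)
    (h : ∀ b : β, {a | f a = some b}.ncard = {a | g a = some b}.ncard) :
    ∃ π : Equiv.Perm ℕ, ∀ a, f (π a) = g a := by
  have key : ∀ b : Option β, Nonempty ({a // g a = b} ≃ {a // f a = b}) := by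
    intro b
    match b with
    | none =>
      have hinf : ∀ (u : ℕ → Option β), {a | u a ≠ none}.Finite →
          ({a | u a = none} : Set ℕ).Infinite := by
        intro u hu
        have : {a | u a = none} = {a | u a ≠ none}ᶜ := by ext x; simp
        rw [this]; exact hu.infinite_compl
      haveI := (hinf f hf).to_subtype
      haveI := (hinf g hg).to_subtype
      obtain ⟨df⟩ := nonempty_denumerable {a | f a = none}
      obtain ⟨dg⟩ := nonempty_denumerable {a | g a = none}
      exact ⟨(@Denumerable.eqv _ dg).trans (@Denumerable.eqv _ df).symm⟩
    | some b =>
      have hff : {a | f a = some b}.Finite := hf.subset (by intro x hx; simp_all)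
      have hgf : {a | g a = some b}.Finite := hg.subset (by intro x hx; simp_all)
      haveI : Finite {a // g a = some b} := hgf.to_subtype
      haveI : Finite {a // f a = some b} := hff.to_subtype
      have hcc := (h b).symm
      rw [← Nat.card_coe_set_eq, ← Nat.card_coe_set_eq] at hcc
      exact Finite.card_eq.mp hcc
  exact ⟨Equiv.ofFiberEquiv (fun b => (key b).some),
    fun a => Equiv.ofFiberEquiv_map _ a⟩

/-- Equal summaries give a renaming. -/
lemma rename_of_summary_eq (C D : Config Q M)
    (hA : ∀ q, C.numInState q = D.numInState q)
    (hM : ∀ m, C.supply m = D.supply m) :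
    ∃ πA πP : Equiv.Perm ℕ, C.rename πA πP = D := by
  obtain ⟨πA, hπA⟩ := exists_perm_comp C.agentState D.agentState C.finAgents D.finAgents hA
  obtain ⟨πP, hπP⟩ := exists_perm_comp C.packetMsg D.packetMsg C.finPackets D.finPackets hM
  exact ⟨πA, πP, Config.ext' (funext hπA) (funext hπP)⟩

lemma consensus_mono {out : Q → Bool} {E F : Config Q M} {b : Bool}
    (h : ∀ q, E.numInState q ≤ F.numInState q)
    (hF : IsConsensus out F b) : IsConsensus out E b := by
  intro a q ha
  have h1 : 1 ≤ E.numInState q := by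
    have : ({a} : Set ℕ) ⊆ {x | E.agentState x = some q} := by simp [ha]
    calc 1 = ({a} : Set ℕ).ncard := by simp
    _ ≤ _ := Set.ncard_le_ncard this (fiberA_finite E q)
  have h2 : 1 ≤ F.numInState q := le_trans h1 (h q)
  have hne : {x | F.agentState x = some q}.Nonempty := by
    rw [← Set.ncard_pos (fiberA_finite F q)]; exact h2
  obtain ⟨a', ha'⟩ := hne
  exact hF a' q ha'

variable [Fintype Q] [Fintype M]

/-- Lifting a single step through summary dominance. -/
lemma step_lift {Step : StepRel Q M} (hP : IsProtocolStep Step) :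
    ∀ (n : ℕ) (E : Config Q M) (A : Set ℕ) (E' F : Config Q M),
      Step E A E' →
      (∀ q, E.numInState q ≤ F.numInState q) →
      (∀ m, E.supply m ≤ F.supply m) →
      ((∑ q, E.numInState q) + ∑ m, E.supply m) + n
        = (∑ q, F.numInState q) + ∑ m, F.supply m →
      ∃ F', stepTo Step F F' ∧ (∀ q, E'.numInState q ≤ F'.numInState q) ∧
        (∀ m, E'.supply m ≤ F'.supply m) := by
  intro n
  induction n with
  | zero =>
    intro E A E' F hstep hq hm htot
    -- summaries are equal
    have hqs : (∑ q, E.numInState q) = ∑ q, F.numInState q := by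
      have := Finset.sum_le_sum (fun q (_ : q ∈ Finset.univ) => hq q)
      have := Finset.sum_le_sum (fun m (_ : m ∈ Finset.univ) => hm m)
      omega
    have hms : (∑ m, E.supply m) = ∑ m, F.supply m := by omega
    have hqe : ∀ q, E.numInState q = F.numInState q :=
      fun q => (Finset.sum_eq_sum_iff_of_le (fun q _ => hq q)).mp hqs q (Finset.mem_univ q)
    have hme : ∀ m, E.supply m = F.supply m :=
      fun m => (Finset.sum_eq_sum_iff_of_le (fun m _ => hm m)).mp hms m (Finset.mem_univ m)
    obtain ⟨πA, πP, hren⟩ := rename_of_summary_eq E F hqe hme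
    refine ⟨E'.rename πA πP, ⟨πA ⁻¹' A, ?_⟩, ?_, ?_⟩
    · rw [← hren]; exact hP.anonymity πA πP hstep
    · intro q; rw [numInState_rename]
    · intro m; rw [supply_rename]
  | succ n ih =>
    intro E A E' F hstep hq hm htot
    by_cases hstrict : ∃ q, E.numInState q < F.numInState q
    · obtain ⟨q0, hq0⟩ := hstrict
      -- pick a fresh agent
      obtain ⟨a, ha⟩ := E.finAgents.infinite_compl.nonempty
      have haE : E.agentState a = none := by
        by_contra hcon; exact ha hcon
      have haE' : E'.agentState a = none := by
        by_contra hcon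
        have : a ∈ E'.agentsDom := hcon
        rw [← hP.agent_conservation hstep] at this
        exact ha this
      obtain ⟨q', hstep'⟩ := hP.add_passive a q0 hstep haE haE'
      have hq2 : ∀ q, (E.setAgent a (some q0)).numInState q ≤ F.numInState q := by
        intro q
        rw [numInState_setAgent E haE]
        by_cases hqq : q = q0
        · subst hqq; simpa using hq0
        · simpa [hqq] using hq q
      have hm2 : ∀ m, (E.setAgent a (some q0)).supply m ≤ F.supply m := by
        intro m; rw [supply_setAgent]; exact hm m
      have htot2 : ((∑ q, (E.setAgent a (some q0)).numInState q)
          + ∑ m, (E.setAgent a (some q0)).supply m) + n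
          = (∑ q, F.numInState q) + ∑ m, F.supply m := by
        have h1 : (∑ q, (E.setAgent a (some q0)).numInState q)
            = (∑ q, E.numInState q) + 1 := by
          simp only [numInState_setAgent E haE, Finset.sum_add_distrib]
          congr 1
          simp
        have h2 : (∑ m, (E.setAgent a (some q0)).supply m) = ∑ m, E.supply m := by
          simp [supply_setAgent]
        omega
      obtain ⟨F', hF', hq3, hm3⟩ := ih (E.setAgent a (some q0)) A (E'.setAgent a (some q'))
        F hstep' hq2 hm2 htot2
      refine ⟨F', hF', ?_, ?_⟩
      · intro q
        refine le_trans ?_ (hq3 q)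
        rw [numInState_setAgent E' haE']
        omega
      · intro m
        refine le_trans ?_ (hm3 m)
        rw [supply_setAgent]
    · -- must be a strict message inequality
      push_neg at hstrict
      have hstrictm : ∃ m, E.supply m < F.supply m := by
        by_contra hcon
        push_neg at hcon
        have h1 : (∑ q, E.numInState q) = ∑ q, F.numInState q :=
          le_antisymm (Finset.sum_le_sum fun q _ => hq q)
            (Finset.sum_le_sum fun q _ => hstrict q)
        have h2 : (∑ m, E.supply m) = ∑ m, F.supply m :=
          le_antisymm (Finset.sum_le_sum fun m _ => hm m)
            (Finset.sum_le_sum fun m _ => hcon m)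
        omega
      obtain ⟨m0, hm0⟩ := hstrictm
      obtain ⟨p, hp⟩ := (E.finPackets.union E'.finPackets).infinite_compl.nonempty
      have hpE : E.packetMsg p = none := by
        by_contra hcon; exact hp (Or.inl hcon)
      have hpE' : E'.packetMsg p = none := by
        by_contra hcon; exact hp (Or.inr hcon)
      have hstep' := hP.ignore_packets p m0 hstep hpE hpE'
      have hq2 : ∀ q, (E.setPacket p (some m0)).numInState q ≤ F.numInState q := by
        intro q; rw [numInState_setPacket]; exact hq q
      have hm2 : ∀ m, (E.setPacket p (some m0)).supply m ≤ F.supply m := by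
        intro m
        rw [supply_setPacket E hpE]
        by_cases hmm : m = m0
        · subst hmm; simpa using hm0
        · simpa [hmm] using hm m
      have htot2 : ((∑ q, (E.setPacket p (some m0)).numInState q)
          + ∑ m, (E.setPacket p (some m0)).supply m) + n
          = (∑ q, F.numInState q) + ∑ m, F.supply m := by
        have h1 : (∑ m, (E.setPacket p (some m0)).supply m)
            = (∑ m, E.supply m) + 1 := by
          simp only [supply_setPacket E hpE, Finset.sum_add_distrib]
          congr 1
          simp
        have h2 : (∑ q, (E.setPacket p (some m0)).numInState q) = ∑ q, E.numInState q := by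
          simp [numInState_setPacket]
        omega
      obtain ⟨F', hF', hq3, hm3⟩ := ih (E.setPacket p (some m0)) A (E'.setPacket p (some m0))
        F hstep' hq2 hm2 htot2
      refine ⟨F', hF', ?_, ?_⟩
      · intro q
        refine le_trans ?_ (hq3 q)
        rw [numInState_setPacket]
      · intro m
        refine le_trans ?_ (hm3 m)
        rw [supply_setPacket E' hpE']
        omega

/-- Lifting reachability through summary dominance. -/
lemma reach_lift {Step : StepRel Q M} (hP : IsProtocolStep Step)
    {C D E : Config Q M}
    (hq : ∀ q, C.numInState q ≤ D.numInState q)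
    (hm : ∀ m, C.supply m ≤ D.supply m)
    (hCE : Reaches Step C E) :
    ∃ F, Reaches Step D F ∧ (∀ q, E.numInState q ≤ F.numInState q) ∧
      (∀ m, E.supply m ≤ F.supply m) := by
  induction hCE with
  | refl => exact ⟨D, Relation.ReflTransGen.refl, hq, hm⟩
  | @tail X Y hCE1 hstep ih =>
    obtain ⟨F, hDF, hq2, hm2⟩ := ih
    obtain ⟨A, hA⟩ := hstep
    obtain ⟨F', hFF', hq3, hm3⟩ := step_lift hP
      ((((∑ q, F.numInState q) + ∑ m, F.supply m))
        - ((∑ q, X.numInState q) + ∑ m, X.supply m)) X A Y F hA hq2 hm2 (by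
          have h1 := Finset.sum_le_sum (fun q (_ : q ∈ (Finset.univ : Finset Q)) => hq2 q)
          have h2 := Finset.sum_le_sum (fun m (_ : m ∈ (Finset.univ : Finset M)) => hm2 m)
          omega)
    exact ⟨F', Relation.ReflTransGen.tail hDF hFF', hq3, hm3⟩

lemma stable_mono {Step : StepRel Q M} {out : Q → Bool} (hP : IsProtocolStep Step)
    {C D : Config Q M} {b : Bool}
    (hq : ∀ q, C.numInState q ≤ D.numInState q)
    (hm : ∀ m, C.supply m ≤ D.supply m)
    (hD : IsStableConsensus Step out D b) : IsStableConsensus Step out C b := by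
  intro E hCE
  obtain ⟨F, hDF, hq2, _⟩ := reach_lift hP hq hm hCE
  exact consensus_mono hq2 (hD F hDF)

end Aux

/-- (i) Configurations with equal summaries are stable consensuses simultaneously;
(ii) the set of summaries of non-stable-consensus configurations is upward closed. -/
theorem summary_and_stable_consensus {Q M Sg : Type} [Fintype Q] [Nonempty Q] [Fintype M]
    [Fintype Sg] [Nonempty Sg] (P : Protocol Q M Sg) (hP : IsProtocolStep P.Step) :
    (∀ C D : Config Q M, summary C = summary D →
      ∀ b : Bool, (IsStableConsensus P.Step P.out C b ↔ IsStableConsensus P.Step P.out D b)) ∧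
    (∀ C D : Config Q M,
      (∀ q, (summary C).1 q ≤ (summary D).1 q) →
      (∀ m, (summary C).2 m ≤ (summary D).2 m) →
      ¬ (∃ b, IsStableConsensus P.Step P.out C b) →
      ¬ (∃ b, IsStableConsensus P.Step P.out D b)) := by
  have key : ∀ C D : Config Q M, (∀ q, (summary C).1 q ≤ (summary D).1 q) →
      (∀ m, (summary C).2 m ≤ (summary D).2 m) → ∀ b : Bool,
      IsStableConsensus P.Step P.out D b → IsStableConsensus P.Step P.out C b := by
    intro C D h1 h2 b hD
    exact stable_mono hP (fun q => h1 q) (fun m => h2 m) hD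
  constructor
  · intro C D h b
    have h1 : ∀ q, (summary C).1 q = (summary D).1 q := fun q => by rw [h]
    have h2 : ∀ m, (summary C).2 m = (summary D).2 m := fun m => by rw [h]
    constructor
    · exact fun hC => key D C (fun q => (h1 q).ge) (fun m => (h2 m).ge) b hC
    · exact fun hD => key C D (fun q => (h1 q).le) (fun m => (h2 m).le) b hD
  · rintro C D h1 h2 hC ⟨b, hD⟩
    exact hC ⟨b, key C D h1 h2 b hD⟩
end

section
/- Let P be a protocol that is shadow-permitting and truncatable with truncation constant K, and suppose P implements the predicate φ : ℕ^Σ → {true, false}. Then for every x ∈ ℕ^Σ and every σ ∈ Σ with x(σ) > |Q|·K, it holds that φ(x + e_σ) = φ(x), where e_σ denotes the σ-th unit vector. -/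
open scoped Classical

/-! The agents initially in state `I(σ)` outnumber `|Q| ⬝ K`, so when the fair execution `E` from
`I(x)` has reached its stable consensus, `K + 1` of them share a state `q`; let `a` be one of them.
The shadow extension around `a` gives an execution from `I(x + e_σ)` which, at that moment, is the
stable consensus of `E` plus one more agent in `q`; by truncatability it is still a stable
consensus with value `φ x`. Continuing it fairly, it must also reach one with value `φ (x + e_σ)`,
and two stable consensuses on one execution agree. -/

namespace Config

variable {Q M : Type}

@[ext]
lemma ext {C D : Config Q M} (hA : C.agentState = D.agentState)
    (hP : C.packetMsg = D.packetMsg) : C = D := by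
  cases C; cases D; simp_all

lemma setAgent_setAgent_agentState (C : Config Q M) (a : ℕ) (s : Option Q) :
    (C.setAgent a s).setAgent a (C.agentState a) = C := by
  ext : 1
  · simp [setAgent, Function.update_idem]
  · rfl

lemma notMem_agentsDom {C : Config Q M} {a : ℕ} : a ∉ C.agentsDom ↔ C.agentState a = none :=
  not_not

lemma finite_stateSet (C : Config Q M) (q : Q) : {a | C.agentState a = some q}.Finite :=
  C.finAgents.subset fun a (ha : C.agentState a = some q) => by simp [ha]

lemma numInState_setAgent [DecidableEq Q] {C : Config Q M} {a : ℕ} (ha : C.agentState a = none)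
    (p q : Q) : (C.setAgent a (some p)).numInState q = C.numInState q + if p = q then 1 else 0 := by
  have hset : {b | (C.setAgent a (some p)).agentState b = some q}
      = if p = q then insert a {b | C.agentState b = some q}
        else {b | C.agentState b = some q} := by
    ext b
    rcases eq_or_ne b a with rfl | hb
    · by_cases hpq : p = q <;> simp [setAgent, hpq, ha]
    · by_cases hpq : p = q <;> simp [setAgent, hpq, hb]
  unfold numInState
  rw [hset]
  split_ifs
  · exact Set.ncard_insert_of_notMem (by simp [ha]) (C.finite_stateSet q)
  · rfl

def empty : Config Q M := ⟨fun _ => none, fun _ => none, by simp, by simp⟩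

lemma exists_numInState_eq_count [DecidableEq Q] (m : Multiset Q) :
    ∃ C : Config Q M, (∀ p, C.packetMsg p = none) ∧ ∀ q, C.numInState q = m.count q := by
  induction m using Multiset.induction_on with
  | empty => exact ⟨empty, fun _ => rfl, fun q => by simp [numInState, empty]⟩
  | cons p m ih =>
    obtain ⟨C, hpack, hnum⟩ := ih
    obtain ⟨a, ha⟩ := C.finAgents.exists_notMem
    refine ⟨C.setAgent a (some p), hpack, fun q => ?_⟩
    rw [numInState_setAgent (notMem_agentsDom.mp ha), hnum]
    simp [Multiset.count_cons, eq_comm]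

end Config

section Executions

variable {Q M : Type} {Step : StepRel Q M}

lemma IsExecution.reaches {E : ℕ → Config Q M} (hE : IsExecution Step E) {i j : ℕ} (hij : i ≤ j) :
    Reaches Step (E i) (E j) := by
  induction j, hij using Nat.le_induction with
  | base => exact Relation.ReflTransGen.refl
  | succ j _ ih =>
    rcases hE j with h | h
    · rwa [h]
    · exact ih.tail h

lemma IsExecution.agentsDom_eq (hP : IsProtocolStep Step) {E : ℕ → Config Q M}
    (hE : IsExecution Step E) (k : ℕ) : (E k).agentsDom = (E 0).agentsDom := by
  induction k with
  | zero => rfl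
  | succ k ih =>
    rcases hE k with h | ⟨A, h⟩
    · rw [h, ih]
    · rw [← hP.agent_conservation h, ih]

lemma IsStableConsensus.eq_of_reaches {out : Q → Bool} {C C' D : Config Q M} {b b' : Bool}
    (h : IsStableConsensus Step out C b) (h' : IsStableConsensus Step out C' b')
    (hD : Reaches Step C D) (hD' : Reaches Step C' D) {a : ℕ} (ha : a ∈ D.agentsDom) : b = b' := by
  obtain ⟨q, hq⟩ := Option.ne_none_iff_exists'.mp ha
  rw [← h D hD a q hq, ← h' D hD' a q hq]

lemma IsExecution.stableConsensus_unique (hP : IsProtocolStep Step) {out : Q → Bool}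
    {E : ℕ → Config Q M} (hE : IsExecution Step E) {a : ℕ} (ha : a ∈ (E 0).agentsDom)
    {i j : ℕ} {b b' : Bool} (hi : IsStableConsensus Step out (E i) b)
    (hj : IsStableConsensus Step out (E j) b') : b = b' :=
  hi.eq_of_reaches hj (hE.reaches (le_max_left i j)) (hE.reaches (le_max_right i j))
    (by rw [hE.agentsDom_eq hP]; exact ha)

lemma IsShadowExtension.exists_isExecution {E : ℕ → Config Q M} {a a' : ℕ}
    {Ext : Set (ℕ → Config Q M)} (hExt : IsShadowExtension Step E a a' Ext) (k : ℕ) :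
    ∃ E', IsExecution Step E' ∧ E' 0 = (E 0).setAgent a' ((E 0).agentState a) ∧
      E' k = (E k).setAgent a' ((E k).agentState a) := by
  obtain ⟨ha, ha', hmem, hsame⟩ := hExt
  have hne : a ≠ a' := fun h => ha' (h ▸ ha)
  obtain ⟨E', hE'mem, hE'k⟩ := hsame k
  obtain ⟨hE', hE'0, hproj⟩ := hmem E' hE'mem
  have hrestore : ∀ i, E' i = (E i).setAgent a' ((E' i).agentState a') := fun i => by
    rw [← hproj i, Config.setAgent_setAgent_agentState]
  have hagent : (E' k).agentState a = (E k).agentState a := by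
    rw [← hproj k]; exact (Function.update_of_ne hne _ _).symm
  exact ⟨E', hE', by rw [hrestore 0, hE'0], by rw [hrestore k, hE'k, hagent]⟩

end Executions

section Inputs

variable {Q M Sg : Type} [Fintype Sg]

lemma exists_isInputConfig (Iin : Sg → Q) (x : Sg → ℕ) :
    ∃ C : Config Q M, IsInputConfig Iin x C := by
  obtain ⟨C, hpack, hnum⟩ := Config.exists_numInState_eq_count (M := M) (∑ σ, x σ • {Iin σ})
  refine ⟨C, hpack, fun q => ?_⟩
  simp [hnum, Multiset.count_sum', Multiset.count_singleton, eq_comm]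

lemma IsInputConfig.le_numInState {Iin : Sg → Q} {x : Sg → ℕ} {C : Config Q M}
    (hC : IsInputConfig Iin x C) (σ : Sg) : x σ ≤ C.numInState (Iin σ) := by
  rw [hC.2]
  exact Finset.single_le_sum (f := fun τ => if Iin τ = Iin σ then x τ else 0)
    (fun _ _ => Nat.zero_le _) (Finset.mem_univ σ) |>.trans_eq' (if_pos rfl)

lemma IsInputConfig.setAgent {Iin : Sg → Q} {x : Sg → ℕ} {C : Config Q M}
    (hC : IsInputConfig Iin x C) {a : ℕ} (ha : C.agentState a = none) (σ : Sg) :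
    IsInputConfig Iin (Function.update x σ (x σ + 1)) (C.setAgent a (some (Iin σ))) := by
  refine ⟨hC.1, fun q => ?_⟩
  have hx : Function.update x σ (x σ + 1) = x + Pi.single σ 1 := by
    funext τ
    rcases eq_or_ne τ σ with rfl | hτ <;> simp [*]
  rw [Config.numInState_setAgent ha, hC.2, hx]
  simp only [Pi.add_apply, ite_add_zero, Finset.sum_add_distrib]
  congr 1
  rw [Finset.sum_eq_single σ (fun τ _ hτ => by simp [hτ]) (by simp)]
  simp

end Inputs

lemma exists_lt_numInState_of_card_mul_lt {Q M : Type} [Fintype Q] {C D : Config Q M}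
    (hdom : C.agentsDom ⊆ D.agentsDom) {K : ℕ} {p : Q} (hp : Fintype.card Q * K < C.numInState p) :
    ∃ a q, C.agentState a = some p ∧ D.agentState a = some q ∧ K < D.numInState q := by
  have hfin := C.finite_stateSet p
  set s := hfin.toFinset
  have hmaps : ∀ b ∈ s, D.agentState b ∈ Finset.univ.map Function.Embedding.some := fun b hb => by
    have hb : C.agentState b = some p := by simpa [s] using hb
    obtain ⟨q, hq⟩ := Option.ne_none_iff_exists'.mp (hdom (show C.agentState b ≠ none by simp [hb]))
    simp [hq]
  obtain ⟨y, hy, hK⟩ := Finset.exists_lt_card_fiber_of_mul_lt_card_of_maps_to hmaps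
    (by rwa [Finset.card_map, Finset.card_univ, ← Set.ncard_eq_toFinset_card _ hfin])
  obtain ⟨q, -, rfl⟩ := Finset.mem_map.mp hy
  obtain ⟨a, ha⟩ := Finset.card_pos.mp (K.zero_le.trans_lt hK)
  have hfiber : ↑{b ∈ s | D.agentState b = some q} ⊆ {b | D.agentState b = some q} := fun b hb => by
    simp_all
  refine ⟨a, q, by simpa [s] using (Finset.mem_filter.mp ha).1, (Finset.mem_filter.mp ha).2, ?_⟩
  exact hK.trans_le ((Set.ncard_coe_finset _).symm.trans_le
    (Set.ncard_le_ncard hfiber (D.finite_stateSet q)))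

theorem shadow_truncatable_threshold_general {Q M Sg : Type} [Fintype Q]
    [Fintype Sg] (P : Protocol Q M Sg) (hP : IsProtocolStep P.Step)
    (hEv : Eventual P.Step P.fair)
    (hshadow : ShadowPermitting P) (K : ℕ) (htrunc : TruncatableWith P.Step P.out K)
    (φ : (Sg → ℕ) → Bool) (himpl : Implements P φ) :
    ∀ (x : Sg → ℕ) (σ : Sg), Fintype.card Q * K < x σ →
      φ (Function.update x σ (x σ + 1)) = φ x := by
  intro x σ hx
  obtain ⟨C, hC⟩ := exists_isInputConfig (M := M) P.Iin x
  obtain ⟨E, hE, rfl, hEfair, hshadowE⟩ := hshadow C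
  obtain ⟨n, hstable⟩ := himpl x _ hC E hE hEfair rfl
  obtain ⟨a, q, ha0, han, hK⟩ :=
    exists_lt_numInState_of_card_mul_lt (hE.agentsDom_eq hP n).ge (hx.trans_le (hC.le_numInState σ))
  have haDom : a ∈ (E 0).agentsDom := by simp [Config.agentsDom, ha0]
  obtain ⟨a', ha', Ext, hExt⟩ := hshadowE a haDom
  obtain ⟨E', hE', hE'0, hE'n⟩ := hExt.exists_isExecution n
  have ha'n : (E n).agentState a' = none :=
    Config.notMem_agentsDom.mp (by rwa [hE.agentsDom_eq hP])
  have hstable' : IsStableConsensus P.Step P.out (E' n) (φ x) := by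
    rw [hE'n, han]
    exact htrunc _ _ q hstable hK.le a' ha'n
  have hinput : IsInputConfig P.Iin (Function.update x σ (x σ + 1)) (E' 0) := by
    rw [hE'0, ha0]
    exact hC.setAgent (Config.notMem_agentsDom.mp ha') σ
  obtain ⟨E'', hagree, hE'', hE''fair⟩ := hEv n E' fun i _ => hE' i
  obtain ⟨m, hstable''⟩ := himpl _ _ hinput E'' hE'' hE''fair (hagree 0 n.zero_le)
  refine hE''.stableConsensus_unique hP (a := a) ?_ hstable'' (hagree n le_rfl ▸ hstable')
  rw [hagree 0 n.zero_le, hE'0]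
  simp [Config.agentsDom, Config.setAgent, Function.update_apply, ha0]

/-- If a shadow-permitting protocol, truncatable with constant `K`, implements `φ`,
then incrementing an input coordinate that is already larger than `|Q| ⬝ K`
does not change the value of `φ`. -/
theorem shadow_truncatable_threshold {Q M Sg : Type} [Fintype Q] [Nonempty Q] [Fintype M]
    [Fintype Sg] [Nonempty Sg] (P : Protocol Q M Sg) (hP : IsProtocolStep P.Step)
    (hEv : Eventual P.Step P.fair) (hAct : EnsuresActivity P.Step P.fair)
    (hshadow : ShadowPermitting P) (K : ℕ) (htrunc : TruncatableWith P.Step P.out K)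
    (φ : (Sg → ℕ) → Bool) (himpl : Implements P φ) :
    ∀ (x : Sg → ℕ) (σ : Sg), Fintype.card Q * K < x σ →
      φ (Function.update x σ (x σ + 1)) = φ x :=
  shadow_truncatable_threshold_general P hP hEv hshadow K htrunc φ himpl
end
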